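/- There is no FOC2 formula φ(x) such that for every finite star graph over binary predicates r1, r2 (with no unary predicates) and every node v, (G,v) ⊨ φ if and only if v has strictly more r1-neighbors than r2-neighbors. Indeed, any candidate φ with all counting thresholds at most m fails to distinguish the centers of the star graphs G(m) and H(m) described below, although the center of G(m) has more r1- than r2-neighbors and the center of H(m) does not. -/

import Mathlib

inductive Var : Type
  | x | y
deriving DecidableEq

structure FOCGraph (P1 P2 : Type) where
  V : Type
  [fintV : Fintype V]
  [decV : DecidableEq V]
  unary : P1 → V → Prop
  rel : P2 → V → V → Prop
  [decU : ∀ p, DecidablePred (unary p)]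
  [decR : ∀ r, DecidableRel (rel r)]

attribute [instance] FOCGraph.fintV FOCGraph.decV FOCGraph.decU FOCGraph.decR

inductive FOC2 (P1 P2 : Type) : Type
  | tru : FOC2 P1 P2
  | atom : P1 → Var → FOC2 P1 P2
  | rel : P2 → Var → Var → FOC2 P1 P2
  | and : FOC2 P1 P2 → FOC2 P1 P2 → FOC2 P1 P2
  | or : FOC2 P1 P2 → FOC2 P1 P2 → FOC2 P1 P2
  | not : FOC2 P1 P2 → FOC2 P1 P2
  | exge : ℕ → Var → FOC2 P1 P2 → FOC2 P1 P2

variable {P1 P2 : Type}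

/-- Satisfaction of a `FOC2` formula in a multi-relational graph under an assignment. -/
def FOCGraph.sat (G : FOCGraph P1 P2) : (Var → G.V) → FOC2 P1 P2 → Prop
  | _, .tru => True
  | σ, .atom p v => G.unary p (σ v)
  | σ, .rel r u w => G.rel r (σ u) (σ w)
  | σ, .and φ ψ => G.sat σ φ ∧ G.sat σ ψ
  | σ, .or φ ψ => G.sat σ φ ∨ G.sat σ ψ
  | σ, .not φ => ¬ G.sat σ φ
  | σ, .exge n v φ => ∃ S : Finset G.V, S.card = n ∧ ∀ a ∈ S, G.sat (Function.update σ v a) φ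

/-- Quantifier depth. -/
def FOC2.depth : FOC2 P1 P2 → ℕ
  | .tru => 0
  | .atom _ _ => 0
  | .rel _ _ _ => 0
  | .and φ ψ => max φ.depth ψ.depth
  | .or φ ψ => max φ.depth ψ.depth
  | .not φ => φ.depth
  | .exge _ _ φ => φ.depth + 1

/-- All counting thresholds are at most `m`. -/
def FOC2.thresholdsLe (m : ℕ) : FOC2 P1 P2 → Prop
  | .tru => True
  | .atom _ _ => True
  | .rel _ _ _ => True
  | .and φ ψ => φ.thresholdsLe m ∧ ψ.thresholdsLe m
  | .or φ ψ => φ.thresholdsLe m ∧ ψ.thresholdsLe m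
  | .not φ => φ.thresholdsLe m
  | .exge n _ φ => n ≤ m ∧ φ.thresholdsLe m

/-- Free variables. -/
def FOC2.freeVars : FOC2 P1 P2 → Finset Var
  | .tru => ∅
  | .atom _ v => {v}
  | .rel _ u w => {u, w}
  | .and φ ψ => φ.freeVars ∪ ψ.freeVars
  | .or φ ψ => φ.freeVars ∪ ψ.freeVars
  | .not φ => φ.freeVars
  | .exge _ v φ => φ.freeVars \ {v}

/-- Parse-tree size. -/
def FOC2.size : FOC2 P1 P2 → ℕ
  | .tru => 1
  | .atom _ _ => 1
  | .rel _ _ _ => 1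
  | .and φ ψ => φ.size + ψ.size + 1
  | .or φ ψ => φ.size + ψ.size + 1
  | .not φ => φ.size + 1
  | .exge _ _ φ => φ.size + 1

/-- `r`-edge predicate from the centre of a star with `p` r1-leaves (nodes `1..p`)
followed by r2-leaves (nodes `p+1..`). `r = true` is `r1`, `r = false` is `r2`. -/
def starEdge (p : ℕ) (r : Bool) (i : ℕ) : Prop :=
  (r = true ∧ 1 ≤ i ∧ i ≤ p) ∨ (r = false ∧ p + 1 ≤ i)

instance (p : ℕ) (r : Bool) (i : ℕ) : Decidable (starEdge p r i) := by
  unfold starEdge; infer_instance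

/-- Star graph: node `0` is the centre, nodes `1..p` are `r1`-leaves and
nodes `p+1..p+q` are `r2`-leaves; edges are symmetric. -/
def star (p q : ℕ) : FOCGraph Empty Bool where
  V := Fin (p + q + 1)
  unary := fun e _ => e.elim
  rel := fun r a b =>
    (a.val = 0 ∧ starEdge p r b.val) ∨ (b.val = 0 ∧ starEdge p r a.val)
  decU := fun e => e.elim
  decR := fun _ _ _ => by infer_instance

/-- The centre of a star graph. -/
def starCenter (p q : ℕ) : (star p q).V := ⟨0, Nat.succ_pos _⟩

/-- Number of `r`-neighbours of a node. -/
def nbrCount (G : FOCGraph Empty Bool) (r : Bool) (v : G.V) : ℕ :=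
  (Finset.univ.filter (fun u => G.rel r v u)).card

/-!
Collapsing each colour class of leaves of `star p q` to a single leaf maps it onto `star 1 1`,
and this map preserves and reflects both edge relations. Hence satisfaction in `star p q` is
satisfaction in `star 1 1` with each counting quantifier adding up the class sizes `1, p, q` of
its witnesses. A threshold `n ≤ m` sees these sizes only through `min · m`, so once `p, q ≥ m`
the centre satisfies the same formulas with thresholds at most `m` whether `p > q` or `p < q`;
`G(m)` and `H(m)` are such a pair.
-/

open Finset

namespace FOC2

theorem thresholdsLe.mono {m m' : ℕ} (h : m ≤ m') {φ : FOC2 P1 P2} (hφ : φ.thresholdsLe m) :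
    φ.thresholdsLe m' := by
  induction φ with
  | tru | atom | rel => trivial
  | and _ _ ihφ ihψ | or _ _ ihφ ihψ => exact ⟨ihφ hφ.1, ihψ hφ.2⟩
  | not _ ih => exact ih hφ
  | exge _ _ _ ih => exact ⟨hφ.1.trans h, ih hφ.2⟩

theorem exists_thresholdsLe (φ : FOC2 P1 P2) : ∃ m, φ.thresholdsLe m := by
  induction φ with
  | tru | atom | rel => exact ⟨0, trivial⟩
  | and _ _ ihφ ihψ | or _ _ ihφ ihψ =>
    obtain ⟨m, hm⟩ := ihφ
    obtain ⟨m', hm'⟩ := ihψ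
    exact ⟨max m m', hm.mono (le_max_left m m'), hm'.mono (le_max_right m m')⟩
  | not _ ih => exact ih
  | exge n _ _ ih =>
    obtain ⟨m, hm⟩ := ih
    exact ⟨max n m, le_max_left n m, hm.mono (le_max_right n m)⟩

end FOC2

theorem Finset.le_sum_iff_of_min_eq {ι : Type*} {c c' : ι → ℕ} {m n : ℕ} (hn : n ≤ m)
    (hc : ∀ k, min (c k) m = min (c' k) m) (T : Finset ι) :
    n ≤ ∑ k ∈ T, c k ↔ n ≤ ∑ k ∈ T, c' k := by
  by_cases hbig : ∃ k ∈ T, m ≤ c k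
  · obtain ⟨k, hk, hmk⟩ := hbig
    have hmk' : m ≤ c' k := by have := hc k; omega
    exact iff_of_true (hn.trans (hmk.trans (single_le_sum (by simp) hk)))
      (hn.trans (hmk'.trans (single_le_sum (by simp) hk)))
  · push Not at hbig
    rw [sum_congr rfl fun k hk => show c k = c' k by have := hc k; have := hbig k hk; omega]

namespace FOCGraph

structure IsStrongHom (G Q : FOCGraph P1 P2) (κ : G.V → Q.V) : Prop where
  unary_iff : ∀ p a, G.unary p a ↔ Q.unary p (κ a)
  rel_iff : ∀ r a b, G.rel r a b ↔ Q.rel r (κ a) (κ b)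

/-- Satisfaction in `Q` when each node `k` stands for `c k` indistinguishable copies of itself:
a counting quantifier adds up the weights of its witnesses. -/
def weightedSat (Q : FOCGraph P1 P2) (c : Q.V → ℕ) : (Var → Q.V) → FOC2 P1 P2 → Prop
  | _, .tru => True
  | σ, .atom p v => Q.unary p (σ v)
  | σ, .rel r u w => Q.rel r (σ u) (σ w)
  | σ, .and φ ψ => Q.weightedSat c σ φ ∧ Q.weightedSat c σ ψ
  | σ, .or φ ψ => Q.weightedSat c σ φ ∨ Q.weightedSat c σ ψ
  | σ, .not φ => ¬ Q.weightedSat c σ φ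
  | σ, .exge n v φ =>
    open scoped Classical in n ≤ ∑ k with Q.weightedSat c (Function.update σ v k) φ, c k

open scoped Classical in
theorem sat_exge_iff (G : FOCGraph P1 P2) (σ : Var → G.V) (n : ℕ) (v : Var) (φ : FOC2 P1 P2) :
    G.sat σ (.exge n v φ) ↔ n ≤ #{a | G.sat (Function.update σ v a) φ} := by
  constructor
  · rintro ⟨S, rfl, hS⟩
    exact card_le_card fun a ha => mem_filter.2 ⟨mem_univ a, hS a ha⟩
  · intro h
    obtain ⟨S, hS, rfl⟩ := exists_subset_card_eq h
    exact ⟨S, rfl, fun a ha => (mem_filter.1 (hS ha)).2⟩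

theorem IsStrongHom.sat_iff_weightedSat {G Q : FOCGraph P1 P2} {κ : G.V → Q.V}
    (hκ : IsStrongHom G Q κ) (φ : FOC2 P1 P2) (σ : Var → G.V) :
    G.sat σ φ ↔ Q.weightedSat (fun k => #{a | κ a = k}) (κ ∘ σ) φ := by
  induction φ generalizing σ with
  | tru => exact Iff.rfl
  | atom p v => exact hκ.unary_iff p (σ v)
  | rel r u w => exact hκ.rel_iff r (σ u) (σ w)
  | and φ ψ ihφ ihψ => exact and_congr (ihφ σ) (ihψ σ)
  | or φ ψ ihφ ihψ => exact or_congr (ihφ σ) (ihψ σ)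
  | not φ ih => exact not_congr (ih σ)
  | exge n v φ ih =>
    classical
    rw [sat_exge_iff, weightedSat, sum_card_fiberwise_eq_card_filter]
    simp only [ih, Function.comp_update, mem_filter, mem_univ, true_and]

theorem weightedSat_congr_of_min_eq {Q : FOCGraph P1 P2} {c c' : Q.V → ℕ} {m : ℕ}
    (hc : ∀ k, min (c k) m = min (c' k) m) {φ : FOC2 P1 P2} (hφ : φ.thresholdsLe m)
    (σ : Var → Q.V) : Q.weightedSat c σ φ ↔ Q.weightedSat c' σ φ := by
  induction φ generalizing σ with
  | tru | atom | rel => exact Iff.rfl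
  | and φ ψ ihφ ihψ => exact and_congr (ihφ hφ.1 σ) (ihψ hφ.2 σ)
  | or φ ψ ihφ ihψ => exact or_congr (ihφ hφ.1 σ) (ihψ hφ.2 σ)
  | not φ ih => exact not_congr (ih hφ σ)
  | exge n v φ ih =>
    classical
    simp only [weightedSat, ih hφ.2]
    exact le_sum_iff_of_min_eq hφ.1 hc _

end FOCGraph

def starCollapse (p q : ℕ) (a : (star p q).V) : (star 1 1).V :=
  ⟨if a.val = 0 then 0 else if a.val ≤ p then 1 else 2, by split_ifs <;> omega⟩

theorem starEdge_starCollapse (p q : ℕ) (r : Bool) (a : (star p q).V) :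
    starEdge 1 r (starCollapse p q a).val ↔ starEdge p r a.val := by
  unfold starCollapse starEdge
  split_ifs <;> cases r <;> simp <;> omega

theorem starCollapse_val_eq_zero (p q : ℕ) (a : (star p q).V) :
    (starCollapse p q a).val = 0 ↔ a.val = 0 := by
  unfold starCollapse; split_ifs <;> simp_all

theorem isStrongHom_starCollapse (p q : ℕ) :
    (star p q).IsStrongHom (star 1 1) (starCollapse p q) where
  unary_iff p := p.elim
  rel_iff r a b := by
    change _ ∨ _ ↔ _ ∨ _
    simp only [starCollapse_val_eq_zero, starEdge_starCollapse]

theorem card_starEdge (p q : ℕ) (r : Bool) :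
    #{a : Fin (p + q + 1) | starEdge p r a} = if r then p else q := by
  rw [← card_map Fin.valEmbedding,
    show map Fin.valEmbedding {a : Fin (p + q + 1) | starEdge p r a}
      = {i ∈ range (p + q + 1) | starEdge p r i} by ext i; simp [Fin.exists_iff]; grind]
  cases r
  · rw [show {i ∈ range (p + q + 1) | starEdge p false i} = Icc (p + 1) (p + q) by
      ext i; simp [starEdge]; omega]
    simp
  · rw [show {i ∈ range (p + q + 1) | starEdge p true i} = Icc 1 p by
      ext i; simp [starEdge]; omega]
    simp

theorem card_starCollapse_eq (p q : ℕ) (k : (star 1 1).V) :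
    #{a | starCollapse p q a = k} = ![1, p, q] k := by
  have hcenter : #{a | starCollapse p q a = starCenter 1 1} = 1 := by
    rw [card_eq_one]
    refine ⟨starCenter p q, ?_⟩
    ext a
    rw [mem_filter, mem_singleton]
    have := starCollapse_val_eq_zero p q a
    exact ⟨fun h => Fin.ext (this.1 (congrArg Fin.val h.2)),
      fun h => ⟨mem_univ a, Fin.ext (this.2 (congrArg Fin.val h))⟩⟩
  have hleaf (r : Bool) (k : (star 1 1).V) (hk : ∀ j : Fin 3, j = k ↔ starEdge 1 r j.val) :
      #{a | starCollapse p q a = k} = if r then p else q :=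
    calc #{a | starCollapse p q a = k} = #{a : (star p q).V | starEdge p r a.val} :=
          congrArg card (filter_congr fun a _ =>
            (hk (starCollapse p q a)).trans (starEdge_starCollapse p q r a))
      _ = if r then p else q := card_starEdge p q r
  change Fin 3 at k
  fin_cases k
  · exact hcenter
  · exact hleaf true _ (by decide)
  · exact hleaf false _ (by decide)

theorem nbrCount_starCenter (p q : ℕ) (r : Bool) :
    nbrCount (star p q) r (starCenter p q) = if r then p else q :=
  (congrArg card (filter_congr fun u _ => by
    change (_ ∧ _) ∨ (_ ∧ _) ↔ _
    simp [starCenter, starEdge])).trans (card_starEdge p q r)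

theorem nbrCount_starCenter_false_lt_true_iff (p q : ℕ) :
    nbrCount (star p q) false (starCenter p q) < nbrCount (star p q) true (starCenter p q) ↔
      q < p := by
  simp only [nbrCount_starCenter, Bool.false_eq_true, if_true, if_false]

theorem star_sat_starCenter_iff {m p q p' q' : ℕ} (hp : min p m = min p' m)
    (hq : min q m = min q' m) {φ : FOC2 Empty Bool} (hφ : φ.thresholdsLe m) :
    (star p q).sat (fun _ => starCenter p q) φ ↔
      (star p' q').sat (fun _ => starCenter p' q') φ := by
  rw [(isStrongHom_starCollapse p q).sat_iff_weightedSat,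
    (isStrongHom_starCollapse p' q').sat_iff_weightedSat]
  simp only [card_starCollapse_eq]
  refine FOCGraph.weightedSat_congr_of_min_eq (fun k => ?_) hφ _
  fin_cases k <;> simp [hp, hq]

/-- No `FOC2` formula expresses "strictly more r1-neighbours than r2-neighbours" on all
star graphs `G(n)`, `H(n)`; indeed any candidate with thresholds at most `m` cannot
distinguish the centres of `G(m)` and `H(m)`, though only the former satisfies the
property. -/
theorem stmt6 :
    (¬ ∃ φ : FOC2 Empty Bool, φ.freeVars ⊆ {Var.x} ∧
      ∀ n : ℕ,
        (∀ v : (star (2 * n + 1) (2 * n)).V,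
          (star (2 * n + 1) (2 * n)).sat (fun _ => v) φ ↔
            nbrCount (star (2 * n + 1) (2 * n)) false v
              < nbrCount (star (2 * n + 1) (2 * n)) true v) ∧
        (∀ v : (star (2 * n) (2 * n + 1)).V,
          (star (2 * n) (2 * n + 1)).sat (fun _ => v) φ ↔
            nbrCount (star (2 * n) (2 * n + 1)) false v
              < nbrCount (star (2 * n) (2 * n + 1)) true v)) ∧
    (∀ (m : ℕ) (φ : FOC2 Empty Bool), φ.thresholdsLe m →
        (((star (2 * m + 1) (2 * m)).sat (fun _ => starCenter (2 * m + 1) (2 * m)) φ ↔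
          (star (2 * m) (2 * m + 1)).sat (fun _ => starCenter (2 * m) (2 * m + 1)) φ))) ∧
    (∀ m : ℕ,
      nbrCount (star (2 * m + 1) (2 * m)) false (starCenter (2 * m + 1) (2 * m))
        < nbrCount (star (2 * m + 1) (2 * m)) true (starCenter (2 * m + 1) (2 * m)) ∧
      ¬ (nbrCount (star (2 * m) (2 * m + 1)) false (starCenter (2 * m) (2 * m + 1))
        < nbrCount (star (2 * m) (2 * m + 1)) true (starCenter (2 * m) (2 * m + 1)))) := by
  have hcenter (m : ℕ) (φ : FOC2 Empty Bool) (hφ : φ.thresholdsLe m) :=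
    star_sat_starCenter_iff (p := 2 * m + 1) (q := 2 * m) (p' := 2 * m) (q' := 2 * m + 1)
      (by omega) (by omega) hφ
  have hcount (m : ℕ) :=
    And.intro ((nbrCount_starCenter_false_lt_true_iff (2 * m + 1) (2 * m)).2 (by omega))
      (mt (nbrCount_starCenter_false_lt_true_iff (2 * m) (2 * m + 1)).1 (by omega))
  refine ⟨?_, hcenter, hcount⟩
  rintro ⟨φ, -, hφ⟩
  obtain ⟨m, hm⟩ := φ.exists_thresholdsLe
  exact (hcount m).2 (((hφ m).2 _).1 ((hcenter m φ hm).1 (((hφ m).1 _).2 (hcount m).1)))
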